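/- arXiv:2510.25250 — 2 statements merged into one kernel-verified Lean document; each statement's English description precedes it below -/
import Mathlib

section
/- For all integers r ≥ 1 and all n ≥ 0, a_{2r}(2n+1) ≡ 0 (mod 2); that is, for every even positive integer k, a_k(2n+1) is even for all n ≥ 0. -/
/-!
Modulo 2 we have `1 - q^{2i} = (1 - q^i)^2`, so for `k = 2r` the reduction of
`∏ (1 - q^{2i})^{k-1} / ∏ (1 - q^i)^k` is the square of `∏ (1 - q^i)^{2r-1} / ∏ (1 - q^i)^r`.
In characteristic 2 a square `f^2` has no odd-degree terms: in `∑_{p+q=m} f_p f_q` the terms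
`(p, q)` and `(q, p)` cancel, and for odd `m` there is no diagonal term.
-/

/-- `a k n` is the number of partitions of `n` in which even parts appear in a single
color while odd parts may appear in any one of `k` colors; equivalently, it is the
coefficient of `q^n` in `∏_{i ≥ 1} (1 - q^{2i})^{k-1} / ∏_{i ≥ 1} (1 - q^i)^k` over `ℤ`.
Each factor `(1 - q^i)` has constant term `1`, hence is a unit in `ℤ⟦q⟧`, and its
inverse is given by `Ring.inverse`.  Since every factor with index `i > n` is of the
form `1 + O(q^{n+1})` and so does not affect the coefficient of `q^n`, the infinite
products may be truncated at `i = n + 1`. -/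
noncomputable def a (k n : ℕ) : ℤ :=
  PowerSeries.coeff n
    ((∏ i ∈ Finset.range (n + 1),
        ((1 : PowerSeries ℤ) - (PowerSeries.X : PowerSeries ℤ) ^ (2 * (i + 1))) ^ (k - 1)) *
      ∏ i ∈ Finset.range (n + 1),
        (Ring.inverse ((1 : PowerSeries ℤ) - (PowerSeries.X : PowerSeries ℤ) ^ (i + 1))) ^ k)

open PowerSeries Finset

theorem map_ringInverse {M N F : Type*} [MonoidWithZero M] [MonoidWithZero N] [FunLike F M N]
    [MonoidHomClass F M N] (f : F) {x : M} (hx : IsUnit x) :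
    f (Ring.inverse x) = Ring.inverse (f x) := by
  rw [← Ring.inverse_mul_cancel_left (f x) (f (Ring.inverse x)) (hx.map f), ← map_mul,
    Ring.mul_inverse_cancel x hx, map_one, mul_one]

instance PowerSeries.charP {R : Type*} [CommSemiring R] (p : ℕ) [CharP R p] :
    CharP R⟦X⟧ p :=
  charP_of_injective_algebraMap C_injective p

theorem PowerSeries.coeff_sq_eq_zero_of_odd {R : Type*} [CommRing R] [CharP R 2] (f : R⟦X⟧)
    {m : ℕ} (hm : Odd m) : coeff m (f ^ 2) = 0 := by
  rw [sq, coeff_mul]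
  refine sum_involution (fun pq _ ↦ pq.swap) (fun pq _ ↦ ?_) (fun pq hpq _ hswap ↦ ?_)
    (fun pq hpq ↦ ?_) (fun pq _ ↦ pq.swap_swap)
  · rw [Prod.fst_swap, Prod.snd_swap, mul_comm, CharTwo.add_self_eq_zero]
  · rw [HasAntidiagonal.mem_antidiagonal] at hpq
    rw [Prod.swap_eq_iff_eq_swap, Prod.ext_iff, Prod.fst_swap] at hswap
    rw [← hpq, ← hswap.1, ← two_mul] at hm
    exact Nat.not_odd_iff_even.mpr (even_two_mul _) hm
  · rwa [HasAntidiagonal.mem_antidiagonal, Prod.fst_swap, Prod.snd_swap, add_comm,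
      ← HasAntidiagonal.mem_antidiagonal]

theorem PowerSeries.isUnit_one_sub_X_pow_succ {R : Type*} [CommRing R] (j : ℕ) :
    IsUnit ((1 : R⟦X⟧) - X ^ (j + 1)) := by
  simp [isUnit_iff_constantCoeff]

theorem PowerSeries.one_sub_X_pow_two_mul {R : Type*} [CommRing R] [CharP R 2] (j : ℕ) :
    (1 : R⟦X⟧) - X ^ (2 * j) = (1 - X ^ j) ^ 2 := by
  rw [sub_pow_char, one_pow, ← pow_mul, mul_comm]

theorem map_zmod_two_eq_sq (N r : ℕ) :
    map (Int.castRingHom (ZMod 2))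
      ((∏ i ∈ range N, ((1 : ℤ⟦X⟧) - X ^ (2 * (i + 1))) ^ (2 * r - 1)) *
        ∏ i ∈ range N, (Ring.inverse ((1 : ℤ⟦X⟧) - X ^ (i + 1))) ^ (2 * r)) =
    ((∏ i ∈ range N, ((1 : (ZMod 2)⟦X⟧) - X ^ (i + 1)) ^ (2 * r - 1)) *
        ∏ i ∈ range N, (Ring.inverse ((1 : (ZMod 2)⟦X⟧) - X ^ (i + 1))) ^ r) ^ 2 := by
  simp only [map_mul, map_prod, map_pow, map_ringInverse _ (isUnit_one_sub_X_pow_succ (R := ℤ) _), map_sub,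
    map_one, map_X]
  rw [mul_pow, ← prod_pow, ← prod_pow]
  congr 1 <;> refine prod_congr rfl fun i _ ↦ ?_
  · rw [one_sub_X_pow_two_mul, ← pow_mul, ← pow_mul, mul_comm]
  · rw [← pow_mul, mul_comm]

theorem a_even_index_odd_cong_general (r : ℕ) (n : ℕ) :
    (2 : ℤ) ∣ a (2 * r) (2 * n + 1) := by
  refine (ZMod.intCast_zmod_eq_zero_iff_dvd _ 2).mp ?_
  rw [a, ← eq_intCast (Int.castRingHom (ZMod 2)), ← coeff_map, map_zmod_two_eq_sq]
  exact coeff_sq_eq_zero_of_odd _ (odd_two_mul_add_one n)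

theorem a_even_index_odd_cong (r : ℕ) (hr : 1 ≤ r) (n : ℕ) :
    (2 : ℤ) ∣ a (2 * r) (2 * n + 1) :=
  a_even_index_odd_cong_general r n
end

section
/- For every prime p ∈ {5, 7, 11, 13, 17} and all integers n ≥ 0, a_3(pn + 3) ≡ 0 (mod 2). -/
open Finset PowerSeries

theorem Ring.map_inverse_of_isUnit {M₀ N₀ F : Type*} [MonoidWithZero M₀] [MonoidWithZero N₀]
    [FunLike F M₀ N₀] [MonoidHomClass F M₀ N₀] (f : F) {x : M₀} (hx : IsUnit x) :
    f (Ring.inverse x) = Ring.inverse (f x) := by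
  obtain ⟨u, rfl⟩ := hx
  simpa [Ring.inverse_unit] using (Ring.inverse_unit (Units.map (f : M₀ →* N₀) u)).symm

namespace PowerSeries

variable {R : Type*} [CommRing R]

theorem isUnit_one_sub_X_pow (m : ℕ) : IsUnit (1 - X ^ (m + 1) : R⟦X⟧) :=
  isUnit_iff_constantCoeff.2 (by simp)

theorem one_sub_X_pow_sq [CharP R 2] (m : ℕ) : (1 - X ^ m : R⟦X⟧) ^ 2 = 1 - X ^ (2 * m) := by
  have h2 : (2 : R⟦X⟧) = 0 := by rw [← map_ofNat (C (R := R)) 2, CharTwo.two_eq_zero, map_zero]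
  linear_combination ((X ^ m : R⟦X⟧) ^ 2 - X ^ m) * h2

theorem map_prod_one_sub_X_pow_two_mul_mul_prod_inverse [CharP R 2] {k : ℕ} (hk : 2 ≤ k)
    (s : Finset ℕ) :
    map (Int.castRingHom R) ((∏ i ∈ s, (1 - X ^ (2 * (i + 1)) : ℤ⟦X⟧) ^ (k - 1)) *
        ∏ i ∈ s, Ring.inverse (1 - X ^ (i + 1) : ℤ⟦X⟧) ^ k) =
      ∏ i ∈ s, (1 - X ^ (i + 1) : R⟦X⟧) ^ (k - 2) := by
  rw [← prod_mul_distrib, map_prod]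
  refine prod_congr rfl fun i _ => ?_
  rw [map_mul, map_pow, map_pow, Ring.map_inverse_of_isUnit _ (isUnit_one_sub_X_pow i)]
  simp only [map_sub, map_one, map_pow, map_X]
  obtain ⟨j, rfl⟩ : ∃ j, k = j + 2 := ⟨k - 2, by omega⟩
  rw [← one_sub_X_pow_sq, ← pow_mul, show 2 * (j + 2 - 1) = j + (j + 2) by omega, pow_add,
    mul_assoc, ← mul_pow, Ring.mul_inverse_cancel _ (isUnit_one_sub_X_pow i), one_pow, mul_one,
    Nat.add_sub_cancel]

theorem coeff_mul_prod_one_sub_X_pow_of_le {n : ℕ} (f : R⟦X⟧) {t : Finset ℕ}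
    (ht : ∀ i ∈ t, n ≤ i) : coeff n (f * ∏ i ∈ t, (1 - X ^ (i + 1))) = coeff n f := by
  set I := Ideal.span {(X : R⟦X⟧) ^ (n + 1)}
  have hprod : Ideal.Quotient.mk I (∏ i ∈ t, (1 - X ^ (i + 1))) = 1 := by
    rw [map_prod]
    refine prod_eq_one fun i hi => ?_
    rw [map_sub, map_one, Ideal.Quotient.eq_zero_iff_mem.2, sub_zero]
    exact Ideal.mem_span_singleton.2 (pow_dvd_pow X (by simpa using ht i hi))
  have hdvd : X ^ (n + 1) ∣ f * ∏ i ∈ t, (1 - X ^ (i + 1)) - f :=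
    Ideal.mem_span_singleton.1 (Ideal.Quotient.eq.1 (by rw [map_mul, hprod, mul_one]))
  simpa [sub_eq_zero] using X_pow_dvd_iff.1 hdvd n n.lt_add_one

theorem coeff_prod_one_sub_X_pow_eq_coeff_pentagonalSeries {n : ℕ} {s : Finset ℕ}
    (hs : range n ⊆ s) :
    coeff n (∏ i ∈ s, (1 - X ^ (i + 1) : R⟦X⟧)) = coeff n (pentagonalSeries R) := by
  obtain ⟨s₀, hs₀⟩ := Filter.eventually_atTop.1 (coeff_prod_one_sub_X_pow_eventually_eq R n)
  have h := hs₀ (s ∪ s₀) subset_union_right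
  rwa [← union_sdiff_self_eq_union, prod_union disjoint_sdiff,
    coeff_mul_prod_one_sub_X_pow_of_le _ fun i hi => ?_] at h
  simpa using mt (@hs i) (mem_sdiff.1 hi).2

end PowerSeries

theorem isSquare_twentyFour_mul_add_one_of_mem_range_pentagonal {m : ℕ}
    (hm : m ∈ Set.range pentagonal) : IsSquare (24 * (m : ℤ) + 1) := by
  obtain ⟨k, rfl⟩ := hm
  exact ⟨6 * k - 1, by linear_combination 12 * two_mul_natCast_pentagonal k⟩

theorem intCast_a_three_eq_coeff_pentagonalSeries (n : ℕ) :
    ((a 3 n : ℤ) : ZMod 2) = coeff n (pentagonalSeries (ZMod 2)) := by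
  rw [a, ← eq_intCast (Int.castRingHom _), ← coeff_map,
    map_prod_one_sub_X_pow_two_mul_mul_prod_inverse (by norm_num)]
  simpa using coeff_prod_one_sub_X_pow_eq_coeff_pentagonalSeries (range_subset_range.2 n.le_succ)

theorem two_dvd_a_three_of_not_isSquare {n : ℕ} (hn : ¬ IsSquare (24 * (n : ℤ) + 1)) :
    2 ∣ a 3 n := by
  refine (ZMod.intCast_zmod_eq_zero_iff_dvd _ 2).1 ?_
  rw [intCast_a_three_eq_coeff_pentagonalSeries]
  exact coeff_pentagonalSeries_eq_zero _
    (mt isSquare_twentyFour_mul_add_one_of_mem_range_pentagonal hn)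

theorem not_isSquare_twentyFour_mul_add_one {p : ℕ} (hp : ¬ IsSquare (73 : ZMod p)) (n : ℕ) :
    ¬ IsSquare (24 * ((p * n + 3 : ℕ) : ℤ) + 1) := by
  have h73 : Int.castRingHom (ZMod p) (24 * ((p * n + 3 : ℕ) : ℤ) + 1) = 73 := by
    rw [eq_intCast]
    push_cast [ZMod.natCast_self]
    ring
  exact fun h => hp (h73 ▸ h.map (Int.castRingHom (ZMod p)))

theorem a_three_cong_mod_two_shift_three (p : ℕ)
    (hp : p ∈ ({5, 7, 11, 13, 17} : Finset ℕ)) (n : ℕ) :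
    (2 : ℤ) ∣ a 3 (p * n + 3) := by
  refine two_dvd_a_three_of_not_isSquare (not_isSquare_twentyFour_mul_add_one ?_ n)
  simp only [mem_insert, mem_singleton] at hp
  rcases hp with rfl | rfl | rfl | rfl | rfl <;> decide
end
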